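/- arXiv:0709.2644 — 4 statements merged into one kernel-verified Lean document; each statement's English description precedes it below -/
import Mathlib

section
/- Let m' ⊆ m be a Lie triple system with H₊ ∈ m' and H₋ ∈ m', let m_{λ₁} := {v ∈ m : the second column of v is 0 and v_{1,1} = v_{2,1} = 0}, and suppose m_{λ₁} ∩ m' ≠ {0}. Set K := {c ∈ ℍ : c·E₁₁ ∈ m'}. Then: (i) K is an ℝ-subspace of ℍ containing 1 that is closed under multiplication (hence a subfield of ℍ); (ii) for every v ∈ m_{λ₁} ∩ m' and every c ∈ K, the matrix v·c (whose first column is v₁·c and whose second column is 0) again lies in m_{λ₁} ∩ m'; (iii) for all v, w ∈ m_{λ₁} ∩ m', the quaternion ⟨v₁, w₁⟩ := Σᵢ conj((v₁)ᵢ)·(w₁)ᵢ lies in K; and (iv) for every v ∈ m_{λ₁} ∩ m' and every c ∈ ℍ with Re(conj(c)·k) = 0 for all k ∈ K, the matrix v·c is Re-orthogonal to m_{λ₁} ∩ m'. -/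
open Matrix

noncomputable section

/-- The quaternions. -/
abbrev ℍq : Type := Quaternion ℝ

/-- The tangent space `m` of `G₂(ℍ^{n+2})`: the `n × 2` quaternionic matrices. -/
abbrev MatH (n : ℕ) : Type := Matrix (Fin n) (Fin 2) ℍq

/-- The curvature tensor of `G₂(ℍ^{n+2})`:
`R(u,v)w = (u vᴴ − v uᴴ) w + w (vᴴ u − uᴴ v)`. -/
def Rcurv {n : ℕ} (u v w : MatH n) : MatH n :=
  (u * vᴴ - v * uᴴ) * w + w * (vᴴ * u - uᴴ * v)

/-- A subset of `m` is a Lie triple system if it is a real-linear subspace which is closed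
under the curvature tensor. -/
def IsLTS {n : ℕ} (s : Set (MatH n)) : Prop :=
  (∃ p : Submodule ℝ (MatH n), (p : Set (MatH n)) = s) ∧
    ∀ u ∈ s, ∀ v ∈ s, ∀ w ∈ s, Rcurv u v w ∈ s

/-- The first row index (row "1" in the paper's 1-based notation). -/
def r0 {n : ℕ} (hn : 2 ≤ n) : Fin n := ⟨0, by omega⟩

/-- The second row index (row "2" in the paper's 1-based notation). -/
def r1 {n : ℕ} (hn : 2 ≤ n) : Fin n := ⟨1, by omega⟩

/-- `q·E₁₁`: the matrix whose only nonzero entry is `q`, in position (1,1). -/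
def E11 {n : ℕ} (hn : 2 ≤ n) (q : ℍq) : MatH n := Matrix.single (r0 hn) 0 q

/-- `q·E₂₂`: the matrix whose only nonzero entry is `q`, in position (2,2). -/
def E22 {n : ℕ} (hn : 2 ≤ n) (q : ℍq) : MatH n := Matrix.single (r1 hn) 1 q

/-- `H₊ = E₁₁`. -/
def Hp {n : ℕ} (hn : 2 ≤ n) : MatH n := E11 hn 1

/-- `H₋ = E₂₂`. -/
def Hm {n : ℕ} (hn : 2 ≤ n) : MatH n := E22 hn 1

/-- The matrix `M_{c,ε}`: entry `(2,1)` equals `c/√2`, entry `(1,2)` equals `ε·conj(c)/√2`,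
all other entries vanish. -/
def Mce {n : ℕ} (hn : 2 ≤ n) (c : ℍq) (ε : ℝ) : MatH n :=
  Matrix.single (r1 hn) 0 ((Real.sqrt 2)⁻¹ • c) +
    Matrix.single (r0 hn) 1 ((ε * (Real.sqrt 2)⁻¹) • star c)

/-- The quaternionic inner product `⟨v,w⟩ = trace (vᴴ w)` on `m`. -/
def qip {n : ℕ} (v w : MatH n) : ℍq := Matrix.trace (vᴴ * w)

/-- The norm on `m`: `‖v‖ = √(Σ |v i j|²)`. -/
def hnorm {n : ℕ} (v : MatH n) : ℝ := Real.sqrt (∑ i, ∑ j, Quaternion.normSq (v i j))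

/-- The symplectic group `Sp(k)` of quaternionic `k × k` matrices. -/
def SpH (k : ℕ) : Set (Matrix (Fin k) (Fin k) ℍq) := {B | Bᴴ * B = 1}

/-- The `j`-th column of a matrix in `m`. -/
def col {n : ℕ} (j : Fin 2) (v : MatH n) : Fin n → ℍq := fun i => v i j

/-- The quaternionic inner product `⟨a,b⟩ = Σᵢ conj(aᵢ)·bᵢ` on `ℍⁿ`. -/
def vip {n : ℕ} (a b : Fin n → ℍq) : ℍq := ∑ i, star (a i) * b i

/-- The imaginary part `Im(q) = (q - conj q)/2` of a quaternion. -/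
def imPart (q : ℍq) : ℍq := (q - star q) / 2

/-- Componentwise right multiplication of a vector by a quaternion. -/
def rightMulV {n : ℕ} (u : Fin n → ℍq) (c : ℍq) : Fin n → ℍq := fun i => u i * c

end

noncomputable section

/-!
The curvature tensor is evaluated on `m_{λ₁}`, whose elements have only a first column, vanishing
in row 1: there `R(c·E₁₁, v) w = c⟨v₁, w₁⟩·E₁₁` and `R(v, c·E₁₁) H₊ = v·c̄`. The first identity
puts `c⟨v₁, w₁⟩` into `K` whenever `c ∈ K`, giving (iii); the second makes `m_{λ₁} ∩ m'` stable
under right multiplication by `K̄ = K`, giving (ii). For `0 ≠ v ∈ m_{λ₁} ∩ m'` and `c, d ∈ K`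
this yields `c⟨v₁, v₁d⟩ = |v₁|² cd ∈ K`, so `K` is multiplicatively closed, and (iv) is the
identity `⟨v·c, w⟩ = c̄⟨v₁, w₁⟩`.
-/

section Curvature

variable {n : ℕ} (hn : 2 ≤ n)

lemma Rcurv_E11_left (c : ℍq) {v w : MatH n}
    (hv1 : ∀ i, v i 1 = 0) (hv0 : v (r0 hn) 0 = 0)
    (hw1 : ∀ i, w i 1 = 0) (hw0 : w (r0 hn) 0 = 0) :
    Rcurv (E11 hn c) v w = E11 hn (c * vip (_root_.col 0 v) (_root_.col 0 w)) := by
  refine Matrix.ext fun i j => ?_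
  fin_cases j <;>
    simp [Rcurv, E11, Matrix.mul_apply, Fin.sum_univ_two, Matrix.single_apply, vip, _root_.col,
      hv1, hw1, hv0, hw0, Finset.mul_sum, mul_assoc, sub_mul, ite_mul, Finset.sum_sub_distrib]

lemma Rcurv_E11_Hp (c : ℍq) {v : MatH n}
    (hv1 : ∀ i, v i 1 = 0) (hv0 : v (r0 hn) 0 = 0) :
    Rcurv v (E11 hn c) (Hp hn) = Matrix.of fun i j => v i j * star c := by
  refine Matrix.ext fun i j => ?_
  fin_cases j <;>
    simp [Rcurv, E11, Hp, Matrix.mul_apply, Matrix.single_apply, hv1, hv0, ite_and]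

end Curvature

lemma qip_of_mul_right {n : ℕ} (c : ℍq) {v w : MatH n} (hv1 : ∀ i, v i 1 = 0)
    (hw1 : ∀ i, w i 1 = 0) :
    qip (Matrix.of fun i j => v i j * c) w =
      star c * vip (_root_.col 0 v) (_root_.col 0 w) := by
  simp [qip, Matrix.trace, Matrix.mul_apply, Fin.sum_univ_two, vip, _root_.col, hv1, hw1,
    Finset.mul_sum, mul_assoc]

lemma vip_rightMulV_self {n : ℕ} (a : Fin n → ℍq) (d : ℍq) :
    vip a (rightMulV a d) = (∑ i, Quaternion.normSq (a i)) • d := by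
  simp only [vip, rightMulV, ← mul_assoc, Quaternion.star_mul_self, Quaternion.coe_mul_eq_smul,
    Finset.sum_smul]

lemma sum_normSq_pos {n : ℕ} {a : Fin n → ℍq} (ha : a ≠ 0) : 0 < ∑ i, Quaternion.normSq (a i) := by
  obtain ⟨i, hi⟩ := Function.ne_iff.1 ha
  exact Finset.sum_pos' (fun _ _ => Quaternion.normSq_nonneg)
    ⟨i, Finset.mem_univ _, Quaternion.normSq_nonneg.lt_of_ne' (Quaternion.normSq_ne_zero.2 hi)⟩

lemma col_zero_ne_zero {n : ℕ} {v : MatH n} (hv1 : ∀ i, v i 1 = 0) (hv : v ≠ 0) :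
    _root_.col 0 v ≠ 0 := by
  refine fun h => hv (Matrix.ext fun i j => ?_)
  fin_cases j
  · exact congrFun h i
  · exact hv1 i

lemma Quaternion.star_mem_of_one_mem {K : Submodule ℝ ℍq} (h1 : (1 : ℍq) ∈ K) {c : ℍq}
    (hc : c ∈ K) : star c ∈ K := by
  rw [Quaternion.star_eq_two_re_sub, ← mul_one ((2 * c.re : ℝ) : ℍq), Quaternion.coe_mul_eq_smul]
  exact K.sub_mem (K.smul_mem _ h1) hc

def e11Coeffs {n : ℕ} (hn : 2 ≤ n) (p : Submodule ℝ (MatH n)) : Submodule ℝ ℍq :=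
  p.comap (Matrix.singleLinearMap ℝ (r0 hn) 0)

section LieTripleSystem

variable {n : ℕ} (hn : 2 ≤ n) {p : Submodule ℝ (MatH n)}
  (hR : ∀ u ∈ p, ∀ v ∈ p, ∀ w ∈ p, Rcurv u v w ∈ p)
include hR

lemma mul_vip_mem_e11Coeffs {c : ℍq} (hc : c ∈ e11Coeffs hn p) {v w : MatH n}
    (hv : v ∈ p) (hv1 : ∀ i, v i 1 = 0) (hv0 : v (r0 hn) 0 = 0)
    (hw : w ∈ p) (hw1 : ∀ i, w i 1 = 0) (hw0 : w (r0 hn) 0 = 0) :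
    c * vip (_root_.col 0 v) (_root_.col 0 w) ∈ e11Coeffs hn p := by
  change E11 hn _ ∈ p
  rw [← Rcurv_E11_left hn c hv1 hv0 hw1 hw0]
  exact hR _ hc _ hv _ hw

lemma of_mul_right_mem (hHp : Hp hn ∈ p) {v : MatH n} (hv : v ∈ p) (hv1 : ∀ i, v i 1 = 0)
    (hv0 : v (r0 hn) 0 = 0) {c : ℍq} (hc : c ∈ e11Coeffs hn p) :
    (Matrix.of fun i j => v i j * c) ∈ p := by
  have hc' : star c ∈ e11Coeffs hn p := Quaternion.star_mem_of_one_mem hHp hc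
  have h := hR v hv (E11 hn (star c)) hc' _ hHp
  rwa [Rcurv_E11_Hp hn _ hv1 hv0, star_star] at h

lemma mul_mem_e11Coeffs (hHp : Hp hn ∈ p) {v : MatH n} (hv : v ∈ p) (hv1 : ∀ i, v i 1 = 0)
    (hv0 : v (r0 hn) 0 = 0) (hv_ne : v ≠ 0) {c d : ℍq} (hc : c ∈ e11Coeffs hn p)
    (hd : d ∈ e11Coeffs hn p) : c * d ∈ e11Coeffs hn p := by
  have h := mul_vip_mem_e11Coeffs hn hR hc hv hv1 hv0 (of_mul_right_mem hn hR hHp hv hv1 hv0 hd)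
    (by simp [hv1]) (by simp [hv0])
  have hcol : _root_.col 0 (Matrix.of fun i j => v i j * d) = rightMulV (_root_.col 0 v) d := rfl
  rw [hcol, vip_rightMulV_self, mul_smul_comm] at h
  exact ((e11Coeffs hn p).smul_mem_iff (sum_normSq_pos (col_zero_ne_zero hv1 hv_ne)).ne').1 h

end LieTripleSystem

theorem stmt12_general (n : ℕ) (hn : 2 ≤ n) (m' : Set (MatH n)) (hlts : IsLTS m')
    (hHp : Hp hn ∈ m')
    (S : Set (MatH n))
    (hS : S = {v | (∀ i, v i 1 = 0) ∧ v (r0 hn) 0 = 0 ∧ v (r1 hn) 0 = 0} ∩ m')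
    (hne : ∃ v ∈ S, v ≠ 0)
    (K : Set ℍq) (hK : K = {c | Matrix.single (r0 hn) (0 : Fin 2) c ∈ m'}) :
    -- (i) K is a real subspace of ℍ containing 1 and closed under multiplication
    ((1 : ℍq) ∈ K ∧ (∀ c ∈ K, ∀ d ∈ K, c * d ∈ K) ∧
      ∃ p : Submodule ℝ ℍq, (p : Set ℍq) = K) ∧
    -- (ii) m_{λ₁} ∩ m' is invariant under right multiplication by K
    (∀ v ∈ S, ∀ c ∈ K, (Matrix.of fun i j => v i j * c) ∈ S) ∧
    -- (iii) the inner products of first columns lie in K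
    (∀ v ∈ S, ∀ w ∈ S, vip (_root_.col 0 v) (_root_.col 0 w) ∈ K) ∧
    -- (iv) right multiplication by c ⟂ K maps m_{λ₁} ∩ m' into its Re-orthocomplement
    (∀ v ∈ S, ∀ c : ℍq, (∀ d ∈ K, (star c * d).re = 0) →
      ∀ w ∈ S, (qip (Matrix.of fun i j => v i j * c) w).re = 0) := by
  obtain ⟨⟨p, rfl⟩, hR⟩ := hlts
  obtain rfl : K = e11Coeffs hn p := hK
  have h1 : (1 : ℍq) ∈ e11Coeffs hn p := hHp
  have hvip : ∀ v ∈ S, ∀ w ∈ S, vip (_root_.col 0 v) (_root_.col 0 w) ∈ e11Coeffs hn p := by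
    rw [hS]
    rintro v ⟨⟨hv1, hv0, -⟩, hv⟩ w ⟨⟨hw1, hw0, -⟩, hw⟩
    simpa only [one_mul] using mul_vip_mem_e11Coeffs hn hR h1 hv hv1 hv0 hw hw1 hw0
  subst hS
  obtain ⟨v₀, ⟨⟨hv₀1, hv₀0, -⟩, hv₀⟩, hv₀_ne⟩ := hne
  refine ⟨⟨h1, fun c hc d hd => mul_mem_e11Coeffs hn hR hHp hv₀ hv₀1 hv₀0 hv₀_ne hc hd, _, rfl⟩,
    ?_, hvip, ?_⟩
  · rintro v ⟨⟨hv1, hv0, hv0'⟩, hv⟩ c hc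
    exact ⟨⟨by simp [hv1], by simp [hv0], by simp [hv0']⟩, of_mul_right_mem hn hR hHp hv hv1 hv0 hc⟩
  · rintro v hv c hc w hw
    rw [qip_of_mul_right c hv.1.1 hw.1.1]
    exact hc _ (hvip v hv w hw)

/-- Lemma 5.4: structure of the root space `m_{λ₁} ∩ m'` of a rank-2 Lie triple system
`m'` containing `H₊, H₋`, governed by the subfield `K = {c : c·E₁₁ ∈ m'}` of `ℍ`. -/
theorem stmt12 (n : ℕ) (hn : 2 ≤ n) (m' : Set (MatH n)) (hlts : IsLTS m')
    (hHp : Hp hn ∈ m') (hHm : Hm hn ∈ m')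
    (S : Set (MatH n))
    (hS : S = {v | (∀ i, v i 1 = 0) ∧ v (r0 hn) 0 = 0 ∧ v (r1 hn) 0 = 0} ∩ m')
    (hne : ∃ v ∈ S, v ≠ 0)
    (K : Set ℍq) (hK : K = {c | Matrix.single (r0 hn) (0 : Fin 2) c ∈ m'}) :
    -- (i) K is a real subspace of ℍ containing 1 and closed under multiplication
    ((1 : ℍq) ∈ K ∧ (∀ c ∈ K, ∀ d ∈ K, c * d ∈ K) ∧
      ∃ p : Submodule ℝ ℍq, (p : Set ℍq) = K) ∧
    -- (ii) m_{λ₁} ∩ m' is invariant under right multiplication by K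
    (∀ v ∈ S, ∀ c ∈ K, (Matrix.of fun i j => v i j * c) ∈ S) ∧
    -- (iii) the inner products of first columns lie in K
    (∀ v ∈ S, ∀ w ∈ S, vip (_root_.col 0 v) (_root_.col 0 w) ∈ K) ∧
    -- (iv) right multiplication by c ⟂ K maps m_{λ₁} ∩ m' into its Re-orthocomplement
    (∀ v ∈ S, ∀ c : ℍq, (∀ d ∈ K, (star c * d).re = 0) →
      ∀ w ∈ S, (qip (Matrix.of fun i j => v i j * c) w).re = 0) :=
  stmt12_general n hn m' hlts hHp S hS hne K hK

end
end

section
/- If U ⊆ ℍⁿ is an ℝ-subspace that is quaternionic, or totally complex with respect to some unit imaginary quaternion, or totally real, then ι₊(U) + ι₋(U) (the set of matrices whose first and second columns both lie in U) is a Lie triple system of m. (These are the Lie triple systems of type (G₂, τ), corresponding to the totally geodesic submanifolds G₂(K^{ℓ+2}) ⊆ G₂(ℍ^{n+2}) for K = ℍ, ℂ, ℝ.) -/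
open Matrix

noncomputable section

/-- `U ⊆ ℍⁿ` is quaternionic: stable under right multiplication by all quaternions. -/
def IsQuatSub {n : ℕ} (U : Submodule ℝ (Fin n → ℍq)) : Prop :=
  ∀ u ∈ U, ∀ c : ℍq, rightMulV u c ∈ U

/-- `U ⊆ ℍⁿ` is totally complex with respect to some unit imaginary quaternion `i`:
`U·i ⊆ U` and `U·j ⟂ U` for every unit imaginary quaternion `j` orthogonal to `i`. -/
def IsTotCplx {n : ℕ} (U : Submodule ℝ (Fin n → ℍq)) : Prop :=
  ∃ i : ℍq, i.re = 0 ∧ Quaternion.normSq i = 1 ∧ (∀ u ∈ U, rightMulV u i ∈ U) ∧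
    ∀ j : ℍq, j.re = 0 → Quaternion.normSq j = 1 → (star i * j).re = 0 →
      ∀ u ∈ U, ∀ u' ∈ U, (vip (rightMulV u j) u').re = 0

/-- `U ⊆ ℍⁿ` is totally real: `U·c ⟂ U` for every imaginary quaternion `c`. -/
def IsTotReal {n : ℕ} (U : Submodule ℝ (Fin n → ℍq)) : Prop :=
  ∀ c : ℍq, c.re = 0 → ∀ u ∈ U, ∀ u' ∈ U, (vip (rightMulV u c) u').re = 0

/-- `U ⊆ ℍⁿ` is of type `(S³)`: a real-3-dimensional subspace of a quaternionic line. -/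
def IsS3 {n : ℕ} (U : Submodule ℝ (Fin n → ℍq)) : Prop :=
  ∃ u₀ : Fin n → ℍq, (∀ u ∈ U, ∃ c : ℍq, u = rightMulV u₀ c) ∧
    Module.finrank ℝ ↥U = 3

/-- `U` is of `ℍP`-type: quaternionic, totally complex, totally real, or of type `(S³)`. -/
def IsHPType {n : ℕ} (U : Submodule ℝ (Fin n → ℍq)) : Prop :=
  IsQuatSub U ∨ IsTotCplx U ∨ IsTotReal U ∨ IsS3 U

end

/-!
Writing `R(u,v)w` column by column, every column is a sum of terms `c·⟨a,b⟩` with `a, b, c`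
columns of `u, v, w`. So `ι₊(U) + ι₋(U)` is a Lie triple system as soon as `c·⟨a,b⟩ ∈ U` for
all `a, b, c ∈ U`. This holds trivially for quaternionic `U`; for totally real `U` the products
`⟨a,b⟩` are real, and for `U` totally complex with respect to `i` they lie in `ℝ + ℝi`, while
`U` is stable under right multiplication by `ℝ + ℝi`.
-/

namespace Quaternion

lemma re_star_mul (x q : ℍq) :
    (star x * q).re = x.re * q.re + x.imI * q.imI + x.imJ * q.imJ + x.imK * q.imK := by
  simp [re_mul]

lemma eq_coe_re_of_forall_re_star_mul_eq_zero {q : ℍq}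
    (h : ∀ x : ℍq, x.re = 0 → (star x * q).re = 0) : q = (q.re : ℍq) := by
  have hq := h q.im (by simp)
  have him : normSq q.im = 0 := by
    rw [re_star_mul] at hq
    rw [normSq_def']
    simp only [re_im, imI_im, imJ_im, imK_im] at hq ⊢
    linarith
  calc q = q.re + q.im := (re_add_im q).symm
    _ = q.re := by rw [normSq_eq_zero.mp him, add_zero]

lemma eq_coe_re_add_smul_of_forall_re_star_mul_eq_zero {i q : ℍq} (hi : i.re = 0)
    (hi1 : normSq i = 1)
    (h : ∀ x : ℍq, x.re = 0 → (star i * x).re = 0 → (star x * q).re = 0) :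
    q = (q.re : ℍq) + (star i * q).re • i := by
  set r := (star i * q).re with hr
  -- the component of `q` orthogonal to `1` and `i`, which `h` tests against itself
  set p := q - (q.re : ℍq) - r • i with hp
  have hi1' : i.imI ^ 2 + i.imJ ^ 2 + i.imK ^ 2 = 1 := by
    rw [normSq_def', hi] at hi1; linarith
  have hpre : p.re = 0 := by simp [hp, hi]
  have hip : (star i * p).re = 0 := by
    simp only [re_star_mul, hp, hr, re_sub, imI_sub, imJ_sub, imK_sub, re_coe, imI_coe,
      imJ_coe, imK_coe, re_smul, imI_smul, imJ_smul, imK_smul, hi, smul_eq_mul]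
    linear_combination (-(i.imI * q.imI + i.imJ * q.imJ + i.imK * q.imK)) * hi1'
  have hpq := h p hpre hip
  have hp0 : normSq p = 0 := by
    rw [re_star_mul] at hip hpq
    rw [normSq_def']
    simp only [hp, re_sub, imI_sub, imJ_sub, imK_sub, re_coe, imI_coe, imJ_coe, imK_coe,
      re_smul, imI_smul, imJ_smul, imK_smul, hi, smul_eq_mul] at hip hpq ⊢
    linear_combination hpq - r * hip
  rw [normSq_eq_zero, hp, sub_sub, sub_eq_zero] at hp0
  exact hp0

end Quaternion

open Quaternion

section RightMulV

variable {n : ℕ}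

lemma rightMulV_add (u : Fin n → ℍq) (x y : ℍq) :
    rightMulV u (x + y) = rightMulV u x + rightMulV u y := by
  funext i; simp [rightMulV, mul_add]

lemma rightMulV_coe (u : Fin n → ℍq) (r : ℝ) : rightMulV u r = r • u := by
  funext i; simp [rightMulV, mul_coe_eq_smul]

lemma rightMulV_smul (u : Fin n → ℍq) (r : ℝ) (x : ℍq) :
    rightMulV u (r • x) = r • rightMulV u x := by
  funext i; simp [rightMulV]

lemma vip_rightMulV (a b : Fin n → ℍq) (x : ℍq) :
    vip (rightMulV a x) b = star x * vip a b := by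
  simp [vip, rightMulV, Finset.mul_sum, mul_assoc]

end RightMulV

section VipStable

variable {n : ℕ} {U : Submodule ℝ (Fin n → ℍq)}

def IsVipStable (U : Submodule ℝ (Fin n → ℍq)) : Prop :=
  ∀ a ∈ U, ∀ b ∈ U, ∀ c ∈ U, rightMulV c (vip a b) ∈ U

lemma IsQuatSub.isVipStable (hU : IsQuatSub U) : IsVipStable U :=
  fun a _ b _ c hc => hU c hc (vip a b)

lemma IsTotReal.isVipStable (hU : IsTotReal U) : IsVipStable U := by
  intro a ha b hb c hc
  have hreal : vip a b = ((vip a b).re : ℍq) :=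
    eq_coe_re_of_forall_re_star_mul_eq_zero fun x hx => by
      simpa [vip_rightMulV] using hU x hx a ha b hb
  rw [hreal, rightMulV_coe]
  exact U.smul_mem _ hc

/-- The orthogonality condition of `IsTotCplx`, freed from the normalisation of `j`. -/
lemma IsTotCplx.exists_forall_re_star_mul_vip_eq_zero (hU : IsTotCplx U) :
    ∃ i : ℍq, i.re = 0 ∧ normSq i = 1 ∧ (∀ u ∈ U, rightMulV u i ∈ U) ∧
      ∀ a ∈ U, ∀ b ∈ U, ∀ x : ℍq, x.re = 0 → (star i * x).re = 0 →
        (star x * vip a b).re = 0 := by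
  obtain ⟨i, hi, hi1, hUi, horth⟩ := hU
  refine ⟨i, hi, hi1, hUi, fun a ha b hb x hx hix => ?_⟩
  rcases eq_or_ne x 0 with rfl | hx0
  · simp
  have hx0' : 0 < normSq x := normSq_nonneg.lt_of_ne (normSq_ne_zero.mpr hx0).symm
  set s := √(normSq x)
  have hs : s ≠ 0 := (Real.sqrt_pos.mpr hx0').ne'
  have hunit : normSq (s⁻¹ • x) = 1 := by
    rw [normSq_smul, inv_pow, Real.sq_sqrt hx0'.le, inv_mul_cancel₀ hx0'.ne']
  have h := horth (s⁻¹ • x) (by simp [hx]) hunit (by simp [hix]) a ha b hb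
  rw [vip_rightMulV, Quaternion.star_smul, smul_mul_assoc, re_smul, smul_eq_mul] at h
  exact (mul_eq_zero.mp h).resolve_left (inv_ne_zero hs)

lemma IsTotCplx.isVipStable (hU : IsTotCplx U) : IsVipStable U := by
  obtain ⟨i, hi, hi1, hUi, horth⟩ := hU.exists_forall_re_star_mul_vip_eq_zero
  intro a ha b hb c hc
  rw [eq_coe_re_add_smul_of_forall_re_star_mul_eq_zero hi hi1 (horth a ha b hb),
    rightMulV_add, rightMulV_coe, rightMulV_smul]
  exact U.add_mem (U.smul_mem _ hc) (U.smul_mem _ (hUi c hc))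

end VipStable

section Curvature

variable {n : ℕ}

lemma col_Rcurv (u v w : MatH n) (j : Fin 2) :
    _root_.col j (Rcurv u v w) = ∑ k : Fin 2,
      (rightMulV (col k u) (vip (col k v) (col j w))
        - rightMulV (col k v) (vip (col k u) (col j w))
        + rightMulV (col k w) (vip (col k v) (col j u))
        - rightMulV (col k w) (vip (col k u) (col j v))) := by
  funext i
  simp only [_root_.col, Rcurv, Matrix.add_apply, Matrix.sub_apply, Matrix.mul_apply,
    Matrix.conjTranspose_apply, Finset.sum_apply, Pi.add_apply, Pi.sub_apply,
    rightMulV, vip, Fin.sum_univ_two, sub_mul, add_mul, mul_sub,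
    Finset.sum_sub_distrib, Finset.sum_add_distrib, Finset.mul_sum, mul_assoc]
  abel

/-- `ι₊(U) + ι₋(U)`. -/
def colSubmodule (U : Submodule ℝ (Fin n → ℍq)) : Submodule ℝ (MatH n) where
  carrier := {v | ∀ j, _root_.col j v ∈ U}
  add_mem' hv hw j := U.add_mem (hv j) (hw j)
  zero_mem' _ := U.zero_mem
  smul_mem' r _ hv j := U.smul_mem r (hv j)

lemma isLTS_colSubmodule {U : Submodule ℝ (Fin n → ℍq)} (hU : IsVipStable U) :
    IsLTS (colSubmodule U : Set (MatH n)) := by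
  refine ⟨⟨_, rfl⟩, fun u hu v hv w hw j => ?_⟩
  rw [col_Rcurv]
  refine Submodule.sum_mem _ fun k _ => ?_
  exact U.sub_mem (U.add_mem (U.sub_mem (hU _ (hv k) _ (hw j) _ (hu k))
    (hU _ (hu k) _ (hw j) _ (hv k))) (hU _ (hv k) _ (hu j) _ (hw k)))
    (hU _ (hu k) _ (hv j) _ (hw k))

end Curvature

theorem stmt13_general (n : ℕ) (U : Submodule ℝ (Fin n → ℍq))
    (hU : IsQuatSub U ∨ IsTotCplx U ∨ IsTotReal U) :
    IsLTS {v : MatH n | col 0 v ∈ U ∧ col 1 v ∈ U} := by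
  have hstable : IsVipStable U := by
    rcases hU with hU | hU | hU
    exacts [hU.isVipStable, hU.isVipStable, hU.isVipStable]
  have hset : {v : MatH n | col 0 v ∈ U ∧ col 1 v ∈ U} = colSubmodule U := by
    ext v
    simp [colSubmodule, Fin.forall_fin_two]
  rw [hset]
  exact isLTS_colSubmodule hstable

/-- The Lie triple systems of type `(G₂, τ)`: for a quaternionic, totally complex or totally
real subspace `U ⊆ ℍⁿ`, the set `ι₊(U) + ι₋(U)` of matrices both of whose columns lie in `U`
is a Lie triple system of `m`. -/
theorem stmt13 (n : ℕ) (hn : 2 ≤ n) (U : Submodule ℝ (Fin n → ℍq))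
    (hU : IsQuatSub U ∨ IsTotCplx U ∨ IsTotReal U) :
    IsLTS {v : MatH n | col 0 v ∈ U ∧ col 1 v ∈ U} :=
  stmt13_general n U hU
end

section
/- Let Φ ∈ Matrix (Fin n) (Fin 2) ℍ satisfy Φᴴ·Φ = 1 (an ℍ-linear isometric embedding ℍ² → ℍⁿ). Then m' := {Φ·X : X ∈ Matrix (Fin 2) (Fin 2) ℍ with Xᴴ = −X} is a Lie triple system of m of real dimension 10. (This is the Lie triple system of type (Sp₂), corresponding to a totally geodesic submanifold isometric to the Lie group Sp(2).) -/
open Matrix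

/-!
Since `Φᴴ Φ = 1`, the curvature tensor on `Φ·𝔰𝔭(2)` becomes `R(ΦX, ΦY)(ΦZ) = Φ [[Y, X], Z]`,
and `𝔰𝔭(2)`, the skew-Hermitian quaternionic `2 × 2` matrices, is closed under commutators.
Left multiplication by `Φ` is injective, and a skew-Hermitian `2 × 2` matrix is determined by
its two purely imaginary diagonal entries and its lower-left entry, giving `3 + 3 + 4 = 10`.
-/

open Quaternion

noncomputable section

instance Quaternion.instStarModule {R : Type*} [CommRing R] [Star R] [TrivialStar R] :
    StarModule R ℍ[R] :=
  ⟨fun r a => by ext <;> simp⟩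

theorem skewAdjoint.lie_mem {A : Type*} [Ring A] [StarRing A] {a b : A}
    (ha : a ∈ skewAdjoint A) (hb : b ∈ skewAdjoint A) : ⁅a, b⁆ ∈ skewAdjoint A := by
  rw [skewAdjoint.mem_iff] at *
  rw [Ring.lie_def, star_sub, star_mul, star_mul, ha, hb]
  noncomm_ring

def Quaternion.skewAdjointEquiv (R : Type*) [CommRing R] [NoZeroDivisors R] [CharZero R]
    [Star R] [TrivialStar R] : skewAdjoint ℍ[R] ≃ₗ[R] R × R × R where
  toFun a := ((a : ℍ[R]).imI, (a : ℍ[R]).imJ, (a : ℍ[R]).imK)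
  invFun x := ⟨(⟨0, x.1, x.2.1, x.2.2⟩ : ℍ[R]),
    skewAdjoint.mem_iff.2 (Quaternion.star_eq_neg.2 rfl)⟩
  map_add' _ _ := rfl
  map_smul' _ _ := rfl
  left_inv a := Subtype.ext <| Quaternion.ext _ _
    (Quaternion.star_eq_neg.1 (skewAdjoint.mem_iff.1 a.2)).symm rfl rfl rfl
  right_inv _ := rfl

theorem Quaternion.finrank_skewAdjoint : Module.finrank ℝ (skewAdjoint ℍ[ℝ]) = 3 := by
  simp [(Quaternion.skewAdjointEquiv ℝ).finrank_eq, Module.finrank_prod]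

section SkewAdjointTwoByTwo

variable (R : Type*) {A : Type*} [Semiring R] [Star R] [TrivialStar R] [AddCommGroup A]
  [StarAddMonoid A] [Module R A] [StarModule R A]

theorem Matrix.mem_skewAdjoint_iff {n : Type*} {X : Matrix n n A} :
    X ∈ skewAdjoint (Matrix n n A) ↔ ∀ i j, star (X j i) = -X i j := by
  simp [skewAdjoint.mem_iff, ← Matrix.ext_iff]

def Matrix.skewAdjointFinTwoEquiv :
    skewAdjoint (Matrix (Fin 2) (Fin 2) A) ≃ₗ[R] skewAdjoint A × skewAdjoint A × A where
  toFun X := (⟨X.1 0 0, Matrix.mem_skewAdjoint_iff.1 X.2 0 0⟩,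
    ⟨X.1 1 1, Matrix.mem_skewAdjoint_iff.1 X.2 1 1⟩, X.1 1 0)
  invFun x := ⟨!![(x.1 : A), -star x.2.2; x.2.2, x.2.1], by
    rw [Matrix.mem_skewAdjoint_iff]
    have h₁ := skewAdjoint.mem_iff.1 x.1.2
    have h₂ := skewAdjoint.mem_iff.1 x.2.1.2
    intro i j
    fin_cases i <;> fin_cases j <;> simp [h₁, h₂]⟩
  map_add' _ _ := rfl
  map_smul' _ _ := rfl
  left_inv X := by
    have hX := Matrix.mem_skewAdjoint_iff.1 X.2
    ext i j
    fin_cases i <;> fin_cases j <;> simp [hX 0 1]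
  right_inv _ := rfl

end SkewAdjointTwoByTwo

theorem Matrix.finrank_skewAdjoint_fin_two_quaternion :
    Module.finrank ℝ (skewAdjoint (Matrix (Fin 2) (Fin 2) ℍ[ℝ])) = 10 := by
  have := Module.Finite.equiv (Quaternion.skewAdjointEquiv ℝ).symm
  rw [(Matrix.skewAdjointFinTwoEquiv ℝ).finrank_eq, Module.finrank_prod, Module.finrank_prod,
    Quaternion.finrank_skewAdjoint, Quaternion.finrank_eq_four]

section SkewAdjointImage

variable {m k : Type*} [Fintype k]

def skewAdjointImage (Φ : Matrix m k ℍq) : Submodule ℝ (Matrix m k ℍq) :=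
  (skewAdjoint.submodule ℝ (Matrix k k ℍq)).map (mulLeftLinearMap k ℝ Φ)

theorem coe_skewAdjointImage (Φ : Matrix m k ℍq) :
    (skewAdjointImage Φ : Set (Matrix m k ℍq)) =
      {v | ∃ X : Matrix k k ℍq, Xᴴ = -X ∧ v = Φ * X} := by
  ext v
  simp [skewAdjointImage, skewAdjoint.submodule, skewAdjoint.mem_iff, star_eq_conjTranspose,
    eq_comm (a := v)]

theorem finrank_skewAdjointImage [Fintype m] [DecidableEq k] {Φ : Matrix m k ℍq}
    (hΦ : Φᴴ * Φ = 1) :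
    Module.finrank ℝ (skewAdjointImage Φ) = Module.finrank ℝ (skewAdjoint (Matrix k k ℍq)) := by
  have hinj : Function.Injective (mulLeftLinearMap k ℝ Φ) :=
    Function.LeftInverse.injective (g := (Φᴴ * ·)) fun X => by
      simp [← Matrix.mul_assoc, hΦ]
  exact (Submodule.equivMapOfInjective _ hinj _).finrank_eq.symm

end SkewAdjointImage

theorem Rcurv_mul_left_of_mem_skewAdjoint {n : ℕ} {Φ : Matrix (Fin n) (Fin 2) ℍq}
    (hΦ : Φᴴ * Φ = 1) {X Y : Matrix (Fin 2) (Fin 2) ℍq} (hX : X ∈ skewAdjoint _)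
    (hY : Y ∈ skewAdjoint _) (Z : Matrix (Fin 2) (Fin 2) ℍq) :
    Rcurv (Φ * X) (Φ * Y) (Φ * Z) = Φ * ⁅⁅Y, X⁆, Z⁆ := by
  rw [skewAdjoint.mem_iff, star_eq_conjTranspose] at hX hY
  have hΦ' : ∀ W : Matrix (Fin 2) (Fin 2) ℍq, Φᴴ * (Φ * W) = W := fun W => by
    rw [← Matrix.mul_assoc, hΦ, Matrix.one_mul]
  simp only [Rcurv, Ring.lie_def, conjTranspose_mul, hX, hY, Matrix.sub_mul, Matrix.mul_sub,
    Matrix.neg_mul, Matrix.mul_neg, Matrix.mul_assoc, hΦ']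
  abel

theorem Rcurv_mem_skewAdjointImage {n : ℕ} {Φ : Matrix (Fin n) (Fin 2) ℍq} (hΦ : Φᴴ * Φ = 1)
    {u v w : MatH n} (hu : u ∈ skewAdjointImage Φ) (hv : v ∈ skewAdjointImage Φ)
    (hw : w ∈ skewAdjointImage Φ) : Rcurv u v w ∈ skewAdjointImage Φ := by
  obtain ⟨X, hX, rfl⟩ := hu
  obtain ⟨Y, hY, rfl⟩ := hv
  obtain ⟨Z, hZ, rfl⟩ := hw
  refine ⟨⁅⁅Y, X⁆, Z⁆, skewAdjoint.lie_mem (skewAdjoint.lie_mem hY hX) hZ, ?_⟩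
  simp only [mulLeftLinearMap_apply]
  exact (Rcurv_mul_left_of_mem_skewAdjoint hΦ hX hY Z).symm

theorem stmt15_general (n : ℕ) (Φ : Matrix (Fin n) (Fin 2) ℍq)
    (hΦ : Φᴴ * Φ = 1) :
    IsLTS {v : MatH n | ∃ X : Matrix (Fin 2) (Fin 2) ℍq, Xᴴ = -X ∧ v = Φ * X} ∧
    ∀ p : Submodule ℝ (MatH n),
      (p : Set (MatH n)) =
        {v : MatH n | ∃ X : Matrix (Fin 2) (Fin 2) ℍq, Xᴴ = -X ∧ v = Φ * X} →
      Module.finrank ℝ ↥p = 10 := by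
  rw [← coe_skewAdjointImage]
  refine ⟨⟨⟨_, rfl⟩, fun u hu v hv w hw => Rcurv_mem_skewAdjointImage hΦ hu hv hw⟩,
    fun p hp => ?_⟩
  rw [SetLike.coe_injective hp, finrank_skewAdjointImage hΦ,
    Matrix.finrank_skewAdjoint_fin_two_quaternion]

/-- The Lie triple system of type `(Sp₂)`: for an `ℍ`-linear isometric embedding
`Φ : ℍ² → ℍⁿ` (i.e. `Φᴴ·Φ = 1`), the set `{Φ·X : Xᴴ = −X}` is a Lie triple system of `m`
of real dimension 10; the corresponding totally geodesic submanifold is isometric to `Sp(2)`. -/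
theorem stmt15 (n : ℕ) (hn : 2 ≤ n) (Φ : Matrix (Fin n) (Fin 2) ℍq)
    (hΦ : Φᴴ * Φ = 1) :
    IsLTS {v : MatH n | ∃ X : Matrix (Fin 2) (Fin 2) ℍq, Xᴴ = -X ∧ v = Φ * X} ∧
    ∀ p : Submodule ℝ (MatH n),
      (p : Set (MatH n)) =
        {v : MatH n | ∃ X : Matrix (Fin 2) (Fin 2) ℍq, Xᴴ = -X ∧ v = Φ * X} →
      Module.finrank ℝ ↥p = 10 :=
  stmt15_general n Φ hΦ

end
end

section
/- For every ℝ-subspace C ⊆ ℍ, the real subspace m' := ℝ·H₊ + ℝ·H₋ + {M_{c,1} : c ∈ C} of m is a Lie triple system. (For dim_ℝ C = ℓ−1 ≥ 1 these are the Lie triple systems of type (S¹×S⁵, ℓ), whose corresponding totally geodesic submanifolds are isometric to (S¹_{r=1/√2} × S^ℓ_{r=1/√2})/{±id}; for ℓ = 5 this type is missing from Chen–Nagano's classification.) -/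
open Matrix

/-!
Write a matrix supported on the first two rows as `P * U`, where `P` is the isometric embedding
of `ℍ²` onto the first two coordinates of `ℍⁿ` and `U` is a `2 × 2` block. Then
`R(PU, PV)(PW) = P · R(U, V)W`, and `m'` consists of the `P * U` with `U = μ • 1 + X` Hermitian,
`X = [[r, c̄/√2], [c/√2, -r]]`, `c ∈ C`. On Hermitian blocks `R(U, V)W = [[U, V], W]`. The scalar
parts are central, and the traceless parts satisfy the Clifford relation `XY + YX = 2⟨X, Y⟩ • 1`,
which forces `[[X, Y], Z] = 4 (⟨Y, Z⟩ X - ⟨X, Z⟩ Y)`, again in `m'`.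
-/

section Anticommuting

variable {R A : Type*} [CommRing R] [Ring A] [Algebra R A]

theorem lie_lie_eq_of_anticomm {X Y Z : A} {b c : R}
    (hYZ : Y * Z + Z * Y = b • 1) (hXZ : X * Z + Z * X = c • 1) :
    ⁅⁅X, Y⁆, Z⁆ = (2 : R) • (b • X - c • Y) := by
  have h : ⁅⁅X, Y⁆, Z⁆ = X * (Y * Z + Z * Y) + (Y * Z + Z * Y) * X
      - Y * (X * Z + Z * X) - (X * Z + Z * X) * Y := by
    simp only [Ring.lie_def]; noncomm_ring
  rw [h, hYZ, hXZ]
  simp only [mul_smul_comm, smul_mul_assoc, mul_one, one_mul, two_smul, smul_sub]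
  abel

theorem lie_lie_smul_one_add (μ ν κ : R) (X Y Z : A) :
    ⁅⁅μ • 1 + X, ν • 1 + Y⁆, κ • 1 + Z⁆ = ⁅⁅X, Y⁆, Z⁆ := by
  have central : ∀ (t : R) (X Y : A), ⁅t • 1 + X, Y⁆ = ⁅X, Y⁆ ∧ ⁅Y, t • 1 + X⁆ = ⁅Y, X⁆ :=
    fun t X Y => by
      simp only [Ring.lie_def, add_mul, mul_add, smul_mul_assoc, mul_smul_comm, one_mul, mul_one]
      constructor <;> abel
  rw [(central μ X _).1, (central ν Y _).2, (central κ Z _).2]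

end Anticommuting

theorem Rcurv_mul_of_conjTranspose_mul_self {n : ℕ} {P : Matrix (Fin n) (Fin 2) ℍq}
    (hP : Pᴴ * P = 1) (U V W : MatH 2) :
    Rcurv (P * U) (P * V) (P * W) = P * Rcurv U V W := by
  simp only [Rcurv, conjTranspose_mul, Matrix.mul_assoc, ← Matrix.mul_assoc Pᴴ, hP,
    Matrix.one_mul, Matrix.mul_add, Matrix.mul_sub, Matrix.sub_mul]

theorem Rcurv_eq_lie_lie {U V : MatH 2} (hU : Uᴴ = U) (hV : Vᴴ = V) (W : MatH 2) :
    Rcurv U V W = ⁅⁅U, V⁆, W⁆ := by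
  simp only [Rcurv, hU, hV, Ring.lie_def]; noncomm_ring

noncomputable def blockEmb {n : ℕ} (hn : 2 ≤ n) : Matrix (Fin n) (Fin 2) ℍq :=
  (1 : Matrix (Fin n) (Fin n) ℍq).submatrix id (Fin.castLE hn)

theorem blockEmb_conjTranspose_mul_self {n : ℕ} (hn : 2 ≤ n) :
    (blockEmb hn)ᴴ * blockEmb hn = 1 := by
  rw [blockEmb, conjTranspose_submatrix, conjTranspose_one,
    ← submatrix_mul _ _ _ _ _ Function.bijective_id, Matrix.one_mul,
    submatrix_one _ (Fin.castLE_injective hn)]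

def tracelessHerm (r : ℝ) (a : ℍq) : MatH 2 := !![(r : ℍq), star a; a, -(r : ℍq)]

open Quaternion in
theorem tracelessHerm_anticomm (r r' : ℝ) (a b : ℍq) :
    tracelessHerm r a * tracelessHerm r' b + tracelessHerm r' b * tracelessHerm r a
      = (2 * (r * r' + (star a * b).re)) • 1 := by
  ext i j : 1
  fin_cases i <;> fin_cases j <;> ext <;> simp [tracelessHerm] <;> ring

theorem conjTranspose_smul_one_add_tracelessHerm (μ r : ℝ) (a : ℍq) :
    (μ • 1 + tracelessHerm r a)ᴴ = μ • 1 + tracelessHerm r a := by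
  ext i j : 1
  fin_cases i <;> fin_cases j <;> simp [tracelessHerm]

theorem add_add_Mce_eq_blockEmb_mul {n : ℕ} (hn : 2 ≤ n) (μ r : ℝ) (c : ℍq) :
    (μ + r) • Hp hn + (μ - r) • Hm hn + Mce hn c 1
      = blockEmb hn * (μ • 1 + tracelessHerm r ((√2)⁻¹ • c)) := by
  ext ⟨_ | _ | i, hi⟩ j : 1 <;> fin_cases j <;>
    simp [blockEmb, Hp, Hm, E11, E22, Mce, tracelessHerm, Matrix.mul_apply, Matrix.one_apply,
      Matrix.single, r0, r1] <;> simp only [Fin.ext_iff, Fin.val_castLE] <;>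
    simp [Algebra.smul_def, sub_eq_add_neg]

def ltsS1S5 {n : ℕ} (hn : 2 ≤ n) (C : Submodule ℝ ℍq) : Submodule ℝ (MatH n) where
  carrier := {v | ∃ s t : ℝ, ∃ c ∈ C, v = s • Hp hn + t • Hm hn + Mce hn c 1}
  zero_mem' := ⟨0, 0, 0, C.zero_mem, by simp [Mce]⟩
  add_mem' := by
    rintro _ _ ⟨s, t, c, hc, rfl⟩ ⟨s', t', c', hc', rfl⟩
    refine ⟨s + s', t + t', c + c', C.add_mem hc hc', ?_⟩
    simp only [Mce, add_smul, smul_add, star_add, Matrix.single_add]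
    abel
  smul_mem' := by
    rintro x _ ⟨s, t, c, hc, rfl⟩
    refine ⟨x * s, x * t, x • c, C.smul_mem x hc, ?_⟩
    simp only [Mce, smul_add, mul_smul, smul_comm x, Matrix.smul_single, Quaternion.star_smul]

theorem exists_blockEmb_mul_of_mem_ltsS1S5 {n : ℕ} {hn : 2 ≤ n} {C : Submodule ℝ ℍq}
    {v : MatH n} (hv : v ∈ ltsS1S5 hn C) :
    ∃ μ r : ℝ, ∃ c ∈ C, v = blockEmb hn * (μ • 1 + tracelessHerm r ((√2)⁻¹ • c)) := by
  obtain ⟨s, t, c, hc, rfl⟩ := hv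
  refine ⟨(s + t) / 2, (s - t) / 2, c, hc, ?_⟩
  rw [← add_add_Mce_eq_blockEmb_mul]
  congr 3 <;> ring

theorem blockEmb_mul_tracelessHerm_mem_ltsS1S5 {n : ℕ} (hn : 2 ≤ n) {C : Submodule ℝ ℍq}
    (r : ℝ) {c : ℍq} (hc : c ∈ C) :
    blockEmb hn * tracelessHerm r ((√2)⁻¹ • c) ∈ ltsS1S5 hn C :=
  ⟨r, -r, c, hc, by simpa using (add_add_Mce_eq_blockEmb_mul hn 0 r c).symm⟩

/-- The Lie triple systems of type `(S¹×S⁵, ℓ)`: for every real subspace `C ⊆ ℍ`, the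
subspace `ℝ·H₊ + ℝ·H₋ + {M_{c,1} : c ∈ C}` of `m` is a Lie triple system. -/
theorem stmt16 (n : ℕ) (hn : 2 ≤ n) (C : Submodule ℝ ℍq) :
    IsLTS {v : MatH n |
      ∃ s t : ℝ, ∃ c ∈ C, v = s • Hp hn + t • Hm hn + Mce hn c 1} := by
  refine ⟨⟨ltsS1S5 hn C, rfl⟩, fun u hu v hv w hw => ?_⟩
  obtain ⟨μ, r, a, ha, rfl⟩ := exists_blockEmb_mul_of_mem_ltsS1S5 (C := C) hu
  obtain ⟨ν, r', b, hb, rfl⟩ := exists_blockEmb_mul_of_mem_ltsS1S5 (C := C) hv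
  obtain ⟨κ, r'', d, -, rfl⟩ := exists_blockEmb_mul_of_mem_ltsS1S5 (C := C) hw
  rw [Rcurv_mul_of_conjTranspose_mul_self (blockEmb_conjTranspose_mul_self hn),
    Rcurv_eq_lie_lie (conjTranspose_smul_one_add_tracelessHerm ..)
      (conjTranspose_smul_one_add_tracelessHerm ..),
    lie_lie_smul_one_add, lie_lie_eq_of_anticomm (tracelessHerm_anticomm ..)
      (tracelessHerm_anticomm ..), Matrix.mul_smul, Matrix.mul_sub, Matrix.mul_smul,
    Matrix.mul_smul]
  have hX := blockEmb_mul_tracelessHerm_mem_ltsS1S5 hn r ha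
  have hY := blockEmb_mul_tracelessHerm_mem_ltsS1S5 hn r' hb
  exact Submodule.smul_mem _ _ <|
    sub_mem (Submodule.smul_mem _ _ hX) (Submodule.smul_mem _ _ hY)
end
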